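/- arXiv:1604.06918 — 4 statements merged into one kernel-verified Lean document; each statement's English description precedes it below -/
import Mathlib

section
/- Let a two-type graph balancing instance be given, let k = ⌊1/c⌋, and let k₀ be a nonnegative integer with 1 + k₀·c < 2. If there exists an orientation with makespan at most 1 + k₀·c, then there exists a feasible integral flow in the network N(k, k₀ + k). -/
open Finset

/-- Edge `e` is incident to vertex `i` (both endpoints of a loop coincide). -/
def Incident {V E : Type} (ends : E → V × V) (e : E) (i : V) : Prop :=
  (ends e).1 = i ∨ (ends e).2 = i

instance {V E : Type} [DecidableEq V] (ends : E → V × V) (e : E) (i : V) :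
    Decidable (Incident ends e i) := by
  unfold Incident; infer_instance

/-- An orientation assigns to each edge one of its endpoints. -/
def IsOrientation {V E : Type} (ends : E → V × V) (σ : E → V) : Prop :=
  ∀ e, Incident ends e (σ e)

/-- Weighted in-degree of vertex `i` under orientation `σ`. -/
def load {V E : Type} [Fintype E] [DecidableEq V]
    (w : E → ℝ) (σ : E → V) (i : V) : ℝ :=
  ∑ e ∈ univ.filter (fun e => σ e = i), w e

/-- Sum of `f e i` over the endpoints `i` of `e`; a loop contributes a single
incident pair. -/
def endSum {V E : Type} [DecidableEq V] (ends : E → V × V) (f : E → V → ℕ) (e : E) : ℕ :=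
  if (ends e).1 = (ends e).2 then f e (ends e).1 else f e (ends e).1 + f e (ends e).2

/-- A feasible integral flow in the network `N(p, q)`: `f` is the flow on
incident pairs of big edges, `g` on incident pairs of small edges. -/
def FeasibleFlow {V E : Type} [Fintype E] [DecidableEq V]
    (ends : E → V × V) (big : E → Bool) (p q : ℕ) (f g : E → V → ℕ) : Prop :=
  (∀ e i, Incident ends e i → big e → f e i ≤ p) ∧
  (∀ e i, Incident ends e i → ¬ big e → g e i ≤ 1) ∧
  (∀ e, big e → p ≤ endSum ends f e) ∧
  (∀ e, ¬ big e → 1 ≤ endSum ends g e) ∧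
  (∀ i : V, ∑ e ∈ univ.filter (fun e => big e ∧ Incident ends e i), f e i ≤ p) ∧
  (∀ i : V, (∑ e ∈ univ.filter (fun e => big e ∧ Incident ends e i), f e i)
      + (∑ e ∈ univ.filter (fun e => ¬ big e ∧ Incident ends e i), g e i) ≤ q)

lemma gb_arith (c : ℝ) (hc0 : 0 < c) (k k₀ B S : ℕ) (hk : (1:ℝ) < (k+1)*c)
    (hk₀ : 1 + (k₀:ℝ)*c < 2)
    (h : (B:ℝ) + S*c ≤ 1 + k₀*c) : k*B + S ≤ k₀ + k := by
  have hB : B ≤ 1 := by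
    by_contra hB
    push_neg at hB
    have h2 : (2:ℝ) ≤ B := by exact_mod_cast hB
    nlinarith [mul_nonneg (Nat.cast_nonneg S : (0:ℝ) ≤ S) hc0.le]
  interval_cases B
  · have : S ≤ k₀ + k := by
      by_contra hS
      push_neg at hS
      have h2 : (k₀ + k + 1 : ℝ) ≤ S := by exact_mod_cast hS
      push_cast at h
      nlinarith [mul_le_mul_of_nonneg_right h2 hc0.le]
    omega
  · have : S ≤ k₀ := by
      by_contra hS
      push_neg at hS
      have h2 : (k₀ + 1 : ℝ) ≤ S := by exact_mod_cast hS
      push_cast at h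
      nlinarith [mul_le_mul_of_nonneg_right h2 hc0.le]
    omega

/-- Lemma 2.1: if some orientation has makespan at most `1 + k₀·c < 2`, where
`k = ⌊1/c⌋`, then the network `N(k, k₀ + k)` admits a feasible integral flow. -/
theorem feasible_flow_of_opt_one_plus {V E : Type} [Fintype V] [Fintype E] [DecidableEq V]
    (ends : E → V × V) (c : ℝ) (hc0 : 0 < c) (hc1 : c < 1)
    (big : E → Bool) (w : E → ℝ) (hw : ∀ e, w e = if big e then 1 else c)
    (k : ℕ) (hk : k = ⌊1 / c⌋₊)
    (k₀ : ℕ) (hk₀ : 1 + (k₀ : ℝ) * c < 2)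
    (σ : E → V) (hσ : IsOrientation ends σ)
    (hms : ∀ i, load w σ i ≤ 1 + (k₀ : ℝ) * c) :
    ∃ f g : E → V → ℕ, FeasibleFlow ends big k (k₀ + k) f g := by
  classical
  have hkc : (1:ℝ) < (k+1)*c := by
    have h1 : 1/c < (⌊1/c⌋₊ : ℝ) + 1 := Nat.lt_floor_add_one _
    rw [hk]
    have := (div_lt_iff₀ hc0).mp h1
    linarith
  -- load decomposition
  have hload : ∀ i, ((univ.filter (fun e => big e = true ∧ σ e = i)).card : ℝ)
      + ((univ.filter (fun e => ¬ big e = true ∧ σ e = i)).card : ℝ) * c ≤ 1 + k₀*c := by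
    intro i
    have h := hms i
    unfold load at h
    rw [← Finset.sum_filter_add_sum_filter_not (univ.filter (fun e => σ e = i))
      (fun e => big e = true)] at h
    rw [Finset.filter_filter, Finset.filter_filter] at h
    rw [show (univ.filter fun e => σ e = i ∧ big e = true)
        = univ.filter (fun e => big e = true ∧ σ e = i) from by ext e; simp [and_comm]] at h
    rw [show (univ.filter fun e => σ e = i ∧ ¬ big e = true)
        = univ.filter (fun e => ¬ big e = true ∧ σ e = i) from by ext e; simp [and_comm]] at h
    have e1 : ∑ e ∈ univ.filter (fun e => big e = true ∧ σ e = i), w e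
        = ((univ.filter (fun e => big e = true ∧ σ e = i)).card : ℝ) := by
      rw [Finset.sum_congr rfl (fun e he => ?_), Finset.sum_const, nsmul_eq_mul, mul_one]
      simp only [Finset.mem_filter] at he
      rw [hw]; simp [he.2.1]
    have e2 : ∑ e ∈ univ.filter (fun e => ¬ big e = true ∧ σ e = i), w e
        = ((univ.filter (fun e => ¬ big e = true ∧ σ e = i)).card : ℝ) * c := by
      rw [Finset.sum_congr rfl (fun e he => ?_), Finset.sum_const, nsmul_eq_mul]
      simp only [Finset.mem_filter] at he
      rw [hw]; simp [he.2.1]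
    rw [e1, e2] at h
    exact h
  have hbig : ∀ i, ∑ e ∈ univ.filter (fun e => big e = true ∧ Incident ends e i),
      (if big e = true ∧ σ e = i then k else 0)
      = k * (univ.filter (fun e => big e = true ∧ σ e = i)).card := by
    intro i
    rw [← Finset.sum_filter, Finset.filter_filter]
    rw [show (univ.filter fun e => (big e = true ∧ Incident ends e i) ∧ big e = true ∧ σ e = i)
        = univ.filter (fun e => big e = true ∧ σ e = i) from ?_]
    · rw [Finset.sum_const, smul_eq_mul, Nat.mul_comm]
    · ext e
      simp only [Finset.mem_filter, Finset.mem_univ, true_and]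
      constructor
      · rintro ⟨_, h2⟩; exact h2
      · rintro ⟨hb, hs⟩; exact ⟨⟨hb, hs ▸ hσ e⟩, hb, hs⟩
  have hsmall : ∀ i, ∑ e ∈ univ.filter (fun e => ¬ big e = true ∧ Incident ends e i),
      (if ¬ big e = true ∧ σ e = i then 1 else 0)
      = (univ.filter (fun e => ¬ big e = true ∧ σ e = i)).card := by
    intro i
    rw [← Finset.sum_filter, Finset.filter_filter]
    rw [show (univ.filter fun e => (¬ big e = true ∧ Incident ends e i) ∧ ¬ big e = true ∧ σ e = i)
        = univ.filter (fun e => ¬ big e = true ∧ σ e = i) from ?_]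
    · rw [Finset.sum_const, smul_eq_mul, Nat.mul_one]
    · ext e
      simp only [Finset.mem_filter, Finset.mem_univ, true_and]
      constructor
      · rintro ⟨_, h2⟩; exact h2
      · rintro ⟨hb, hs⟩; exact ⟨⟨hb, hs ▸ hσ e⟩, hb, hs⟩
  refine ⟨fun e i => if big e = true ∧ σ e = i then k else 0,
          fun e i => if ¬ big e = true ∧ σ e = i then 1 else 0, ?_, ?_, ?_, ?_, ?_, ?_⟩
  · intro e i _ _; dsimp only; split <;> omega
  · intro e i _ _; dsimp only; split <;> omega
  · intro e he
    unfold endSum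
    dsimp only
    rcases hσ e with h | h <;> rw [← h] <;> by_cases hl : (ends e).1 = (ends e).2
    · rw [if_pos hl, if_pos ⟨he, rfl⟩]
    · rw [if_neg hl, if_pos ⟨he, rfl⟩, if_neg (fun hc => hl hc.2)]; omega
    · rw [if_pos hl, if_pos ⟨he, hl.symm⟩]
    · rw [if_neg hl, if_neg (fun hc => hl hc.2.symm), if_pos ⟨he, rfl⟩]; omega
  · intro e he
    unfold endSum
    dsimp only
    rcases hσ e with h | h <;> rw [← h] <;> by_cases hl : (ends e).1 = (ends e).2
    · rw [if_pos hl, if_pos ⟨he, rfl⟩]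
    · rw [if_neg hl, if_pos ⟨he, rfl⟩, if_neg (fun hc => hl hc.2)]
    · rw [if_pos hl, if_pos ⟨he, hl.symm⟩]
    · rw [if_neg hl, if_neg (fun hc => hl hc.2.symm), if_pos ⟨he, rfl⟩]
  · intro i
    dsimp only
    rw [hbig i]
    have h := hload i
    by_contra hcon
    push_neg at hcon
    have h2 : (2:ℕ) ≤ (univ.filter (fun e => big e = true ∧ σ e = i)).card := by
      rcases Nat.lt_or_ge (univ.filter (fun e => big e = true ∧ σ e = i)).card 2 with h2 | h2
      · interval_cases hq : (univ.filter (fun e => big e = true ∧ σ e = i)).card <;> omega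
      · exact h2
    have h2' : (2:ℝ) ≤ ((univ.filter (fun e => big e = true ∧ σ e = i)).card : ℝ) := by
      exact_mod_cast h2
    have hS : (0:ℝ) ≤ ((univ.filter (fun e => ¬ big e = true ∧ σ e = i)).card : ℝ) * c :=
      mul_nonneg (Nat.cast_nonneg _) hc0.le
    linarith
  · intro i
    dsimp only
    rw [hbig i, hsmall i]
    exact gb_arith c hc0 k k₀ _ _ hkc hk₀ (hload i)
end

section
/- Let a two-type graph balancing instance be given with 1/c not an integer, let k = ⌊1/c⌋, and let k₀' be a nonnegative integer with k₀'·c < 2. If there exists an orientation with makespan at most k₀'·c, then there exists a feasible integral flow in the network N(k+1, k₀'). -/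
open Finset

/-!
Orient every edge as the optimal orientation `σ` does: a big edge sends `k + 1` units to its head
and a small edge one unit. A vertex with `b` big and `s` small incoming edges satisfies
`b + s c ≤ k₀' c < 2`, so `b ≤ 1`; when `b = 1`, the strict bound `k c < 1` (which needs `1/c ∉ ℤ`)
gives `(k + s) c < 1 + s c ≤ k₀' c`, hence `k + 1 + s ≤ k₀'`.
-/

lemma natFloor_one_div_mul_lt_one {c : ℝ} (hc : 0 < c) (hnotint : ¬ ∃ n : ℤ, 1 / c = n) :
    (⌊1 / c⌋₊ : ℝ) * c < 1 := by
  have hlt : (⌊1 / c⌋₊ : ℝ) < 1 / c :=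
    (Nat.floor_le (by positivity)).lt_of_ne fun h => hnotint ⟨⌊1 / c⌋₊, by exact_mod_cast h.symm⟩
  exact (lt_div_iff₀ hc).mp hlt

lemma card_le_one_and_mul_add_le {b s k q : ℕ} {c : ℝ} (hc : 0 < c) (hkc : (k : ℝ) * c < 1)
    (hq : (q : ℝ) * c < 2) (h : (b : ℝ) + s * c ≤ q * c) : b ≤ 1 ∧ b * (k + 1) + s ≤ q := by
  have hb : b ≤ 1 := by
    have : (b : ℝ) < 2 := by nlinarith [mul_nonneg (Nat.cast_nonneg (α := ℝ) s) hc.le]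
    have : b < 2 := by exact_mod_cast this
    omega
  refine ⟨hb, ?_⟩
  rcases Nat.le_one_iff_eq_zero_or_eq_one.mp hb with rfl | rfl
  · have : (s : ℝ) ≤ q := le_of_mul_le_mul_right (by simpa using h) hc
    simpa using (by exact_mod_cast this : s ≤ q)
  · have : ((k + s : ℕ) : ℝ) < q := by
      rw [← mul_lt_mul_iff_of_pos_right hc]; push_cast; push_cast at h; linarith
    have : k + s < q := by exact_mod_cast this
    omega

section Orientation

variable {V E : Type} [DecidableEq V]

lemma load_eq_card_add_card_mul [Fintype E] (big : E → Bool) (c : ℝ) (w : E → ℝ)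
    (hw : ∀ e, w e = if big e then 1 else c) (σ : E → V) (i : V) :
    load w σ i = #(univ.filter fun e => big e = true ∧ σ e = i)
      + #(univ.filter fun e => ¬ big e = true ∧ σ e = i) * c := by
  simp only [load, hw, sum_ite, sum_const, filter_filter, nsmul_eq_mul, mul_one, and_comm]

def orientationFlow (σ : E → V) (P : E → Prop) [DecidablePred P] (a : ℕ) : E → V → ℕ :=
  fun e i => if P e ∧ σ e = i then a else 0

variable {ends : E → V × V} {σ : E → V} (P : E → Prop) [DecidablePred P] (a : ℕ)

lemma orientationFlow_le (e : E) (i : V) : orientationFlow σ P a e i ≤ a := by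
  unfold orientationFlow; split_ifs <;> omega

lemma endSum_orientationFlow (hσ : IsOrientation ends σ) {e : E} (he : P e) :
    endSum ends (orientationFlow σ P a) e = a := by
  unfold endSum orientationFlow
  rcases hσ e with h | h <;> split_ifs <;> simp_all

lemma sum_orientationFlow [Fintype E] (hσ : IsOrientation ends σ) (i : V) :
    ∑ e ∈ univ.filter (fun e => P e ∧ Incident ends e i), orientationFlow σ P a e i
      = #(univ.filter fun e => P e ∧ σ e = i) * a := by
  unfold orientationFlow
  rw [← sum_filter, filter_filter, sum_const, smul_eq_mul]
  congr 3
  ext e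
  constructor
  · exact fun h => h.2
  · rintro ⟨hP, rfl⟩
    exact ⟨⟨hP, hσ e⟩, hP, rfl⟩

end Orientation

theorem feasible_flow_of_opt_multiple_general {V E : Type} [Fintype E] [DecidableEq V]
    (ends : E → V × V) (c : ℝ) (hc0 : 0 < c)
    (hnotint : ¬ ∃ n : ℤ, 1 / c = (n : ℝ))
    (big : E → Bool) (w : E → ℝ) (hw : ∀ e, w e = if big e then 1 else c)
    (k : ℕ) (hk : k = ⌊1 / c⌋₊)
    (k₀' : ℕ) (hk₀' : (k₀' : ℝ) * c < 2)
    (σ : E → V) (hσ : IsOrientation ends σ)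
    (hms : ∀ i, load w σ i ≤ (k₀' : ℝ) * c) :
    ∃ f g : E → V → ℕ, FeasibleFlow ends big (k + 1) k₀' f g := by
  have hkc : (k : ℝ) * c < 1 := hk ▸ natFloor_one_div_mul_lt_one hc0 hnotint
  have hvertex := fun i => card_le_one_and_mul_add_le hc0 hkc hk₀'
    ((load_eq_card_add_card_mul big c w hw σ i).symm.trans_le (hms i))
  refine ⟨orientationFlow σ (fun e => big e = true) (k + 1),
    orientationFlow σ (fun e => ¬ big e = true) 1,
    fun e i _ _ => orientationFlow_le _ _ e i, fun e i _ _ => orientationFlow_le _ _ e i,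
    fun e he => (endSum_orientationFlow _ _ hσ he).ge,
    fun e he => (endSum_orientationFlow _ _ hσ he).ge, fun i => ?_, fun i => ?_⟩
  · rw [sum_orientationFlow _ _ hσ]
    exact mul_le_of_le_one_left (Nat.zero_le _) (hvertex i).1
  · rw [sum_orientationFlow _ _ hσ, sum_orientationFlow _ _ hσ, mul_one]
    exact (hvertex i).2

/-- Lemma 2.2: if `1/c` is not an integer and some orientation has makespan at
most `k₀'·c < 2`, where `k = ⌊1/c⌋`, then the network `N(k + 1, k₀')` admits a
feasible integral flow. -/
theorem feasible_flow_of_opt_multiple {V E : Type} [Fintype V] [Fintype E] [DecidableEq V]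
    (ends : E → V × V) (c : ℝ) (hc0 : 0 < c) (hc1 : c < 1)
    (hnotint : ¬ ∃ n : ℤ, 1 / c = (n : ℝ))
    (big : E → Bool) (w : E → ℝ) (hw : ∀ e, w e = if big e then 1 else c)
    (k : ℕ) (hk : k = ⌊1 / c⌋₊)
    (k₀' : ℕ) (hk₀' : (k₀' : ℝ) * c < 2)
    (σ : E → V) (hσ : IsOrientation ends σ)
    (hms : ∀ i, load w σ i ≤ (k₀' : ℝ) * c) :
    ∃ f g : E → V → ℕ, FeasibleFlow ends big (k + 1) k₀' f g :=
  feasible_flow_of_opt_multiple_general ends c hc0 hnotint big w hw k hk k₀' hk₀' σ hσ hms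
end

section
/- Let a two-type graph balancing instance be given, let k = ⌊1/c⌋, and let k₀ be a nonnegative integer with 1 + k₀·c < 2. If there exists a feasible integral flow in the network N(k, k₀ + k), then there exists an orientation of the instance with makespan at most (3/2)·(1 + k₀·c). -/
open Finset

/-- Lemma 4.1: with `k = ⌊1/c⌋` and `1 + k₀·c < 2`, a feasible integral flow in
`N(k, k₀ + k)` yields an orientation with makespan at most `(3/2)·(1 + k₀·c)`. -/
theorem orientation_from_flow_case_one {V E : Type} [Fintype V] [Fintype E] [DecidableEq V]
    (ends : E → V × V) (c : ℝ) (hc0 : 0 < c) (hc1 : c < 1)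
    (big : E → Bool) (w : E → ℝ) (hw : ∀ e, w e = if big e then 1 else c)
    (k : ℕ) (hk : k = ⌊1 / c⌋₊)
    (k₀ : ℕ) (hk₀ : 1 + (k₀ : ℝ) * c < 2)
    (f g : E → V → ℕ) (hflow : FeasibleFlow ends big k (k₀ + k) f g) :
    ∃ σ : E → V, IsOrientation ends σ ∧
      ∀ i, load w σ i ≤ (3 / 2) * (1 + (k₀ : ℝ) * c) := by
  classical
  unfold FeasibleFlow at hflow
  obtain ⟨hf_cap, hg_cap, hf_low, hg_low, hf_vert, hfg_vert⟩ := hflow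
  have hk1 : 1 ≤ k := by
    rw [hk]
    have h1 : (1:ℝ) ≤ 1 / c := one_le_one_div hc0 hc1.le
    exact Nat.le_floor (by exact_mod_cast h1)
  have hkc : (k : ℝ) * c ≤ 1 := by
    have h1 : (k : ℝ) ≤ 1 / c := hk ▸ Nat.floor_le (by positivity)
    have h2 := mul_le_mul_of_nonneg_right h1 hc0.le
    rwa [one_div, inv_mul_cancel₀ hc0.ne'] at h2
  -- allowed endpoints of big edges
  set t : E → Finset V := fun e =>
    univ.filter (fun i => Incident ends e i ∧ k ≤ 2 * f e i) with ht
  have ht_mem : ∀ e i, i ∈ t e ↔ Incident ends e i ∧ k ≤ 2 * f e i := by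
    intro e i; simp [ht]
  have ht_ne : ∀ e, big e = true → (t e).Nonempty := by
    intro e he
    have hlow := hf_low e he
    unfold endSum at hlow
    by_cases hl : (ends e).1 = (ends e).2
    · rw [if_pos hl] at hlow
      exact ⟨(ends e).1, (ht_mem _ _).2 ⟨Or.inl rfl, by omega⟩⟩
    · rw [if_neg hl] at hlow
      rcases Nat.lt_or_ge (2 * f e (ends e).1) k with h | h
      · exact ⟨(ends e).2, (ht_mem _ _).2 ⟨Or.inr rfl, by omega⟩⟩
      · exact ⟨(ends e).1, (ht_mem _ _).2 ⟨Or.inl rfl, h⟩⟩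
  have ht_card_le : ∀ e, (t e).card ≤ 2 := by
    intro e
    have hsub : t e ⊆ {(ends e).1, (ends e).2} := by
      intro i hi
      rcases ((ht_mem e i).1 hi).1 with h | h <;> rw [← h] <;> simp
    refine le_trans (Finset.card_le_card hsub) ?_
    refine le_trans (Finset.card_insert_le _ _) ?_
    simp
  -- weight of a big edge: 2 if it has a single allowed endpoint, else 1
  set wt : E → ℕ := fun e => 3 - (t e).card with hwt
  -- a big edge with a single allowed endpoint carries flow > k/2 there
  have hforced : ∀ e, big e = true → ∀ i, i ∈ t e → (t e).card = 1 →
      k + 1 ≤ 2 * f e i := by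
    intro e he i hi hcard
    obtain ⟨a, ha⟩ := Finset.card_eq_one.mp hcard
    have hia : a = i := by
      have h := hi; rw [ha] at h
      have := Finset.mem_singleton.1 h; exact this.symm
    subst hia
    have hlow := hf_low e he
    unfold endSum at hlow
    by_cases hl : (ends e).1 = (ends e).2
    · rw [if_pos hl] at hlow
      have hi1 : (ends e).1 = a := by
        rcases ((ht_mem e a).1 hi).1 with h | h
        · exact h
        · rw [hl]; exact h
      rw [hi1] at hlow
      omega
    · rw [if_neg hl] at hlow
      rcases ((ht_mem e a).1 hi).1 with h1 | h1
      · -- a is the first endpoint, the second is not allowed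
        have hj : ¬ (k ≤ 2 * f e (ends e).2) := by
          intro hcon
          have hmem2 : (ends e).2 ∈ t e := (ht_mem _ _).2 ⟨Or.inr rfl, hcon⟩
          rw [ha] at hmem2
          simp only [Finset.mem_singleton] at hmem2
          exact hl (by rw [h1, hmem2])
        rw [h1] at hlow
        omega
      · -- a is the second endpoint, the first is not allowed
        have hj : ¬ (k ≤ 2 * f e (ends e).1) := by
          intro hcon
          have hmem2 : (ends e).1 ∈ t e := (ht_mem _ _).2 ⟨Or.inl rfl, hcon⟩
          rw [ha] at hmem2
          simp only [Finset.mem_singleton] at hmem2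
          exact hl (by rw [h1, hmem2])
        rw [h1] at hlow
        omega
  -- per-vertex bound on the total weight of allowed big edges
  have hvert : ∀ i : V,
      ∑ e ∈ univ.filter (fun e => big e = true ∧ i ∈ t e), wt e ≤ 2 := by
    intro i
    set D := univ.filter (fun e => big e = true ∧ i ∈ t e) with hD
    have hDmem : ∀ e ∈ D, big e = true ∧ i ∈ t e := by
      intro e he; simpa [hD] using he
    have hDf : ∑ e ∈ D, f e i ≤ k := by
      refine le_trans (Finset.sum_le_sum_of_subset ?_) (hf_vert i)
      intro e he
      obtain ⟨hb, hti⟩ := hDmem e he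
      simp only [Finset.mem_filter, Finset.mem_univ, true_and]
      exact ⟨hb, ((ht_mem e i).1 hti).1⟩
    have hkey : ∀ e ∈ D, k + wt e ≤ 2 * f e i + 1 := by
      intro e he
      obtain ⟨hb, hti⟩ := hDmem e he
      have h2f : k ≤ 2 * f e i := ((ht_mem e i).1 hti).2
      have hc1 : 0 < (t e).card := Finset.card_pos.mpr ⟨i, hti⟩
      have hc2 := ht_card_le e
      rcases Nat.lt_or_ge (t e).card 2 with h | h
      · have hcard1 : (t e).card = 1 := by omega
        have hf1 := hforced e hb i hti hcard1
        have hwte : wt e = 2 := by simp [hwt, hcard1]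
        omega
      · have hcard2 : (t e).card = 2 := by omega
        have hwte : wt e = 1 := by simp [hwt, hcard2]
        omega
    have hsum : D.card * k + ∑ e ∈ D, wt e ≤ 2 * k + D.card := by
      have h1 : ∑ e ∈ D, (k + wt e) ≤ ∑ e ∈ D, (2 * f e i + 1) :=
        Finset.sum_le_sum hkey
      rw [Finset.sum_add_distrib, Finset.sum_add_distrib, Finset.sum_const,
        Finset.sum_const, smul_eq_mul, smul_eq_mul, mul_one, ← Finset.mul_sum] at h1
      have h2 : 2 * ∑ e ∈ D, f e i ≤ 2 * k := by omega
      omega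
    have hwle : ∑ e ∈ D, wt e ≤ 2 * D.card := by
      calc ∑ e ∈ D, wt e ≤ ∑ _e ∈ D, 2 := by
            refine Finset.sum_le_sum ?_
            intro e he
            obtain ⟨hb, hti⟩ := hDmem e he
            have hc1 : 0 < (t e).card := Finset.card_pos.mpr ⟨i, hti⟩
            simp only [hwt]
            omega
        _ = 2 * D.card := by rw [Finset.sum_const, smul_eq_mul, mul_comm]
    rcases Nat.lt_or_ge D.card 2 with h | h
    · omega
    · obtain ⟨m, hm⟩ : ∃ m, D.card = m + 2 := ⟨D.card - 2, by omega⟩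
      rw [hm] at hsum
      have hexp : (m + 2) * k = m * k + 2 * k := by ring
      rw [hexp] at hsum
      have hmk : m ≤ m * k := Nat.le_mul_of_pos_right m (by omega)
      omega
  -- Hall's condition for big edges
  have hhall : ∀ S : Finset {e : E // big e = true},
      S.card ≤ (S.biUnion (fun e => t e.1)).card := by
    intro S
    have key : 2 * S.card ≤ 2 * (S.biUnion (fun e => t e.1)).card := by
      have e1 : ∑ e ∈ S, wt e.1 * (t e.1).card = 2 * S.card := by
        rw [Finset.sum_congr rfl (g := fun _ => 2) ?_]
        · rw [Finset.sum_const, smul_eq_mul, mul_comm]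
        · intro e _
          have h1 : 0 < (t e.1).card := Finset.card_pos.mpr (ht_ne e.1 e.2)
          have h2 := ht_card_le e.1
          have hcase : (t e.1).card = 1 ∨ (t e.1).card = 2 := by omega
          rcases hcase with h | h <;> simp [hwt, h]
      have e2 : ∑ e ∈ S, wt e.1 * (t e.1).card = ∑ e ∈ S, ∑ _i ∈ t e.1, wt e.1 := by
        refine Finset.sum_congr rfl fun e _ => ?_
        rw [Finset.sum_const, smul_eq_mul, mul_comm]
      have e3 : ∑ e ∈ S, ∑ _i ∈ t e.1, wt e.1
          = ∑ i ∈ S.biUnion (fun e => t e.1),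
              ∑ e ∈ S.filter (fun e => i ∈ t e.1), wt e.1 := by
        refine Finset.sum_comm' ?_
        intro e i
        constructor
        · rintro ⟨hS, hti⟩
          exact ⟨Finset.mem_filter.2 ⟨hS, hti⟩, Finset.mem_biUnion.2 ⟨e, hS, hti⟩⟩
        · rintro ⟨hf', _⟩
          exact ⟨(Finset.mem_filter.1 hf').1, (Finset.mem_filter.1 hf').2⟩
      have e4 : ∀ i, ∑ e ∈ S.filter (fun e => i ∈ t e.1), wt e.1 ≤ 2 := by
        intro i
        have hmap : ∑ e ∈ ((S.filter (fun e => i ∈ t e.1)).image Subtype.val), wt e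
            = ∑ e ∈ S.filter (fun e => i ∈ t e.1), wt e.1 :=
          Finset.sum_image (by intro x _ y _ h; exact Subtype.ext h)
        rw [← hmap]
        refine le_trans (Finset.sum_le_sum_of_subset ?_) (hvert i)
        intro e he
        simp only [Finset.mem_image, Finset.mem_filter] at he
        obtain ⟨a, ⟨⟨_, hta⟩, hav⟩⟩ := he
        simp only [Finset.mem_filter, Finset.mem_univ, true_and]
        exact ⟨hav ▸ a.2, hav ▸ hta⟩
      calc 2 * S.card = ∑ i ∈ S.biUnion (fun e => t e.1),
              ∑ e ∈ S.filter (fun e => i ∈ t e.1), wt e.1 := by rw [← e3, ← e2, e1]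
        _ ≤ ∑ _i ∈ S.biUnion (fun e => t e.1), 2 :=
            Finset.sum_le_sum fun i _ => e4 i
        _ = 2 * (S.biUnion (fun e => t e.1)).card := by
            rw [Finset.sum_const, smul_eq_mul, mul_comm]
    omega
  obtain ⟨σb, hσb_inj, hσb_mem⟩ :=
    (Finset.all_card_le_biUnion_card_iff_exists_injective (fun e : {e : E // big e = true} => t e.1)).1 hhall
  -- orientation of small edges
  have hsmall : ∀ e, ¬ (big e = true) → ∃ i, Incident ends e i ∧ 1 ≤ g e i := by
    intro e he
    have hlow := hg_low e he
    unfold endSum at hlow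
    by_cases hl : (ends e).1 = (ends e).2
    · rw [if_pos hl] at hlow
      exact ⟨(ends e).1, Or.inl rfl, hlow⟩
    · rw [if_neg hl] at hlow
      rcases Nat.lt_or_ge (g e (ends e).1) 1 with h | h
      · exact ⟨(ends e).2, Or.inr rfl, by omega⟩
      · exact ⟨(ends e).1, Or.inl rfl, h⟩
  choose sm hsm_inc hsm_g using hsmall
  set σ : E → V := fun e => if h : big e = true then σb ⟨e, h⟩ else sm e h with hσ
  refine ⟨σ, ?_, ?_⟩
  · -- it is an orientation
    intro e
    by_cases h : big e = true
    · have hmem : σb ⟨e, h⟩ ∈ t e := hσb_mem ⟨e, h⟩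
      have hσe : σ e = σb ⟨e, h⟩ := by simp only [hσ]; exact dif_pos h
      rw [hσe]
      exact ((ht_mem e _).1 hmem).1
    · have hσe : σ e = sm e h := by simp only [hσ]; exact dif_neg h
      rw [hσe]
      exact hsm_inc e h
  · -- load bound
    intro i
    unfold load
    set B := (univ.filter (fun e => σ e = i)).filter (fun e => big e = true) with hB
    set Sm := (univ.filter (fun e => σ e = i)).filter (fun e => ¬ big e = true) with hSm
    have hsplit : ∑ e ∈ univ.filter (fun e => σ e = i), w e
        = ∑ e ∈ B, w e + ∑ e ∈ Sm, w e :=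
      (Finset.sum_filter_add_sum_filter_not _ _ _).symm
    have hBsum : ∑ e ∈ B, w e = (B.card : ℝ) := by
      have hone : ∀ e ∈ B, w e = 1 := by
        intro e he
        rw [hw e, if_pos]
        exact (Finset.mem_filter.1 he).2
      rw [Finset.sum_congr rfl hone, Finset.sum_const, nsmul_eq_mul, mul_one]
    have hSsum : ∑ e ∈ Sm, w e = (Sm.card : ℝ) * c := by
      have hcc : ∀ e ∈ Sm, w e = c := by
        intro e he
        rw [hw e, if_neg]
        exact (Finset.mem_filter.1 he).2
      rw [Finset.sum_congr rfl hcc, Finset.sum_const, nsmul_eq_mul]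
    have hBmem : ∀ e ∈ B, σ e = i ∧ big e = true := by
      intro e he
      have h := Finset.mem_filter.1 he
      exact ⟨(Finset.mem_filter.1 h.1).2, h.2⟩
    have hSmmem : ∀ e ∈ Sm, σ e = i ∧ ¬ big e = true := by
      intro e he
      have h := Finset.mem_filter.1 he
      exact ⟨(Finset.mem_filter.1 h.1).2, h.2⟩
    have hBcard : B.card ≤ 1 := by
      rw [Finset.card_le_one]
      intro e₁ h₁ e₂ h₂
      obtain ⟨hσ₁, hb₁⟩ := hBmem e₁ h₁
      obtain ⟨hσ₂, hb₂⟩ := hBmem e₂ h₂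
      have k₁ : σ e₁ = σb ⟨e₁, hb₁⟩ := by simp only [hσ]; exact dif_pos hb₁
      have k₂ : σ e₂ = σb ⟨e₂, hb₂⟩ := by simp only [hσ]; exact dif_pos hb₂
      have : σb ⟨e₁, hb₁⟩ = σb ⟨e₂, hb₂⟩ := by rw [← k₁, ← k₂, hσ₁, hσ₂]
      exact congrArg Subtype.val (hσb_inj this)
    have hSg : Sm.card ≤ ∑ e ∈ univ.filter (fun e => ¬ big e ∧ Incident ends e i), g e i := by
      have h1 : ∀ e ∈ Sm, 1 ≤ g e i := by
        intro e he
        obtain ⟨hσe, hbe⟩ := hSmmem e he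
        have hs : σ e = sm e hbe := by simp only [hσ]; exact dif_neg hbe
        rw [← hσe, hs]
        exact hsm_g e hbe
      calc Sm.card = ∑ _e ∈ Sm, 1 := by rw [Finset.sum_const, smul_eq_mul, mul_one]
        _ ≤ ∑ e ∈ Sm, g e i := Finset.sum_le_sum h1
        _ ≤ _ := by
            refine Finset.sum_le_sum_of_subset ?_
            intro e he
            obtain ⟨hσe, hbe⟩ := hSmmem e he
            have hs : σ e = sm e hbe := by simp only [hσ]; exact dif_neg hbe
            simp only [Finset.mem_filter, Finset.mem_univ, true_and]
            refine ⟨hbe, ?_⟩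
            rw [← hσe, hs]
            exact hsm_inc e hbe
    have htot := hfg_vert i
    rw [hsplit, hBsum, hSsum]
    have hk₀c : (0:ℝ) ≤ (k₀:ℝ) * c := by positivity
    rcases Nat.le_one_iff_eq_zero_or_eq_one.mp hBcard with h0 | h1
    · rw [h0]
      have hS : Sm.card ≤ k₀ + k := by omega
      have hSr : (Sm.card : ℝ) ≤ (k₀:ℝ) + k := by exact_mod_cast hS
      have h2 : (Sm.card:ℝ) * c ≤ ((k₀:ℝ) + k) * c :=
        mul_le_mul_of_nonneg_right hSr hc0.le
      nlinarith [hkc, hk₀c]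
    · obtain ⟨e, he⟩ := Finset.card_eq_one.mp h1
      have heB : e ∈ B := by rw [he]; exact Finset.mem_singleton_self e
      obtain ⟨hσe, hbe⟩ := hBmem e heB
      have hσe' : σ e = σb ⟨e, hbe⟩ := by simp only [hσ]; exact dif_pos hbe
      have hit : i ∈ t e := by
        have hmem : σb ⟨e, hbe⟩ ∈ t e := hσb_mem ⟨e, hbe⟩
        rwa [← hσe', hσe] at hmem
      have h2f : k ≤ 2 * f e i := ((ht_mem e i).1 hit).2
      have hfle : f e i ≤ ∑ e ∈ univ.filter (fun e => big e ∧ Incident ends e i), f e i := by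
        refine Finset.single_le_sum (f := fun e => f e i) (fun _ _ => Nat.zero_le _) ?_
        simp only [Finset.mem_filter, Finset.mem_univ, true_and]
        exact ⟨hbe, ((ht_mem e i).1 hit).1⟩
      have hnat : Sm.card + f e i ≤ k₀ + k := by omega
      have hr1 : (Sm.card:ℝ) + (f e i:ℝ) ≤ (k₀:ℝ) + k := by exact_mod_cast hnat
      have hr2 : (k:ℝ) ≤ 2 * (f e i:ℝ) := by exact_mod_cast h2f
      have hr3 : (Sm.card:ℝ) * c ≤ ((k₀:ℝ) + (k:ℝ)/2) * c := by
        refine mul_le_mul_of_nonneg_right (by linarith) hc0.le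
      rw [h1]
      push_cast
      nlinarith [hkc, hk₀c]
end

section
/- Let a two-type graph balancing instance be given with 1/c not an integer, let k = ⌊1/c⌋, and let k₀' be a nonnegative integer with 1 ≤ k₀'·c < 2. If there exists a feasible integral flow in the network N(k+1, k₀'), then there exists an orientation of the instance with makespan at most (3/2)·(k₀'·c). -/
open Finset

/-- A big edge is *balanced* (w.r.t. a threshold `t`) if both of its endpoint
flow values lie strictly below `t`. -/
def BalEdge {V E : Type} (ends : E → V × V) (big : E → Bool)
    (f : E → V → ℕ) (t : ℕ) (e : E) : Prop :=
  big e = true ∧ f e (ends e).1 < t ∧ f e (ends e).2 < t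

/-- Lemma 4.2: with `1/c` not an integer, `k = ⌊1/c⌋` and `1 ≤ k₀'·c < 2`, a
feasible integral flow in `N(k + 1, k₀')` yields an orientation with makespan
at most `(3/2)·(k₀'·c)`. -/
theorem orientation_from_flow_case_two {V E : Type} [Fintype V] [Fintype E] [DecidableEq V]
    (ends : E → V × V) (c : ℝ) (hc0 : 0 < c) (hc1 : c < 1)
    (hnotint : ¬ ∃ n : ℤ, 1 / c = (n : ℝ))
    (big : E → Bool) (w : E → ℝ) (hw : ∀ e, w e = if big e then 1 else c)
    (k : ℕ) (hk : k = ⌊1 / c⌋₊)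
    (k₀' : ℕ) (hk₀l : 1 ≤ (k₀' : ℝ) * c) (hk₀u : (k₀' : ℝ) * c < 2)
    (f g : E → V → ℕ) (hflow : FeasibleFlow ends big (k + 1) k₀' f g) :
    ∃ σ : E → V, IsOrientation ends σ ∧
      ∀ i, load w σ i ≤ (3 / 2) * ((k₀' : ℝ) * c) := by
  classical
  obtain ⟨hcapf, hcapg, hlowf, hlowg, hvf, hvfg⟩ := hflow
  set t : ℕ := (k + 1) / 2 + 1 with ht
  -- ### basic numeric facts
  have hc1' : (1 : ℝ) < 1 / c := one_lt_one_div hc0 hc1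
  have hk1 : 1 ≤ k := by
    rw [hk]; exact Nat.le_floor (by push_cast; linarith)
  have hkc : (1 : ℝ) < ((k : ℝ) + 1) * c := by
    have h2 : 1 / c < (k : ℝ) + 1 := by
      rw [hk]; push_cast; exact Nat.lt_floor_add_one _
    exact (div_lt_iff₀ hc0).mp h2
  -- ### facts about balanced edges
  have hBal2 : ∀ e, BalEdge ends big f t e → ∀ i, Incident ends e i →
      k + 1 ≤ 2 * f e i := by
    intro e he i hi
    obtain ⟨hb, h1, h2⟩ := he
    have hlow := hlowf e (by simp [hb])
    unfold endSum at hlow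
    by_cases hl : (ends e).1 = (ends e).2
    · rw [if_pos hl] at hlow
      rcases hi with hi | hi <;> subst hi <;> rw [← hl] at * <;> omega
    · rw [if_neg hl] at hlow
      rcases hi with hi | hi <;> subst hi <;> omega
  have hBalne : ∀ e, BalEdge ends big f t e → (ends e).1 ≠ (ends e).2 := by
    intro e he hl
    obtain ⟨hb, h1, h2⟩ := he
    have hlow := hlowf e (by simp [hb])
    unfold endSum at hlow
    rw [if_pos hl] at hlow; omega
  -- ### Hall's theorem on the balanced edges
  set tset : {e : E // BalEdge ends big f t e} → Finset V :=
    fun e => {(ends e.1).1, (ends e.1).2} with htset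
  have hmemtset : ∀ (e : {e : E // BalEdge ends big f t e}) (i : V),
      i ∈ tset e ↔ Incident ends e.1 i := by
    intro e i
    simp only [htset, Finset.mem_insert, Finset.mem_singleton, Incident]
    constructor
    · rintro (h | h) <;> [left; right] <;> exact h.symm
    · rintro (h | h) <;> [left; right] <;> exact h.symm
  have hall : ∀ s : Finset {e : E // BalEdge ends big f t e},
      s.card ≤ (s.biUnion tset).card := by
    intro s
    set U := s.biUnion tset with hU
    have hsub : ∀ e ∈ s, tset e ⊆ U := fun e he => Finset.subset_biUnion_of_mem tset he
    have hcard2 : ∀ e : {e : E // BalEdge ends big f t e}, (tset e).card = 2 := by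
      intro e
      simp only [htset]
      rw [Finset.card_insert_of_notMem (by simp [hBalne e.1 e.2]), Finset.card_singleton]
    -- fiber bound: each vertex lies in at most two balanced edges of `s`
    have hfiber : ∀ i : V, (s.filter (fun e => i ∈ tset e)).card ≤ 2 := by
      intro i
      set Fb : Finset E := (s.filter (fun e => i ∈ tset e)).image Subtype.val with hFb
      have hcardFb : Fb.card = (s.filter (fun e => i ∈ tset e)).card :=
        Finset.card_image_of_injective _ Subtype.val_injective
      have hFbsub : Fb ⊆ univ.filter (fun e => big e ∧ Incident ends e i) := by
        intro e he
        simp only [hFb, Finset.mem_image, Finset.mem_filter] at he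
        obtain ⟨a, ⟨-, hti⟩, rfl⟩ := he
        have hinc : Incident ends a.1 i := (hmemtset a i).mp hti
        simp only [Finset.mem_filter, Finset.mem_univ, true_and]
        exact ⟨by simp [a.2.1], hinc⟩
      have hlb : ∀ e ∈ Fb, k + 1 ≤ 2 * f e i := by
        intro e he
        simp only [hFb, Finset.mem_image, Finset.mem_filter] at he
        obtain ⟨a, ⟨-, hti⟩, rfl⟩ := he
        exact hBal2 a.1 a.2 i ((hmemtset a i).mp hti)
      have h1 : Fb.card * (k + 1) ≤ ∑ e ∈ Fb, 2 * f e i := by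
        have := Finset.card_nsmul_le_sum Fb (fun e => 2 * f e i) (k + 1) hlb
        simpa [smul_eq_mul] using this
      have h2 : ∑ e ∈ Fb, 2 * f e i ≤ 2 * (k + 1) := by
        rw [← Finset.mul_sum]
        have := Finset.sum_le_sum_of_subset (f := fun e => f e i) hFbsub
        exact Nat.mul_le_mul_left 2 (le_trans this (hvf i))
      have h3 : Fb.card * (k + 1) ≤ 2 * (k + 1) := le_trans h1 h2
      have h4 : Fb.card ≤ 2 := by
        by_contra hcon
        push_neg at hcon
        have := Nat.mul_le_mul_right (k + 1) hcon
        omega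
      omega
    -- double counting
    have hdc : 2 * s.card ≤ 2 * U.card := by
      have e1 : 2 * s.card = ∑ e ∈ s, (tset e).card := by
        rw [Finset.sum_congr rfl (fun e _ => hcard2 e), Finset.sum_const, smul_eq_mul,
          mul_comm]
      have e2 : ∀ e ∈ s, (tset e).card = ∑ i ∈ U, (if i ∈ tset e then 1 else 0) := by
        intro e he
        rw [← Finset.card_filter, Finset.filter_mem_eq_inter,
          Finset.inter_eq_right.mpr (hsub e he)]
      have e3 : ∑ e ∈ s, (tset e).card
          = ∑ i ∈ U, (s.filter (fun e => i ∈ tset e)).card := by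
        rw [Finset.sum_congr rfl e2, Finset.sum_comm]
        refine Finset.sum_congr rfl fun i _ => ?_
        rw [Finset.card_filter]
      rw [e1, e3]
      calc ∑ i ∈ U, (s.filter (fun e => i ∈ tset e)).card
          ≤ ∑ i ∈ U, 2 := Finset.sum_le_sum fun i _ => hfiber i
        _ = 2 * U.card := by rw [Finset.sum_const, smul_eq_mul, mul_comm]
    omega
  obtain ⟨inj, hinj, hinjmem⟩ :=
    (Finset.all_card_le_biUnion_card_iff_exists_injective tset).mp hall
  -- ### the orientation
  set inj' : E → V := fun e =>
    if h : BalEdge ends big f t e then inj ⟨e, h⟩ else (ends e).1 with hinj'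
  set σ : E → V := fun e =>
    if big e then
      (if t ≤ f e (ends e).1 then (ends e).1
       else if t ≤ f e (ends e).2 then (ends e).2
       else inj' e)
    else (if 1 ≤ g e (ends e).1 then (ends e).1 else (ends e).2) with hσ
  have hinj'mem : ∀ e, BalEdge ends big f t e → Incident ends e (inj' e) := by
    intro e he
    have : inj' e = inj ⟨e, he⟩ := by simp [hinj', dif_pos he]
    rw [this]
    exact (hmemtset ⟨e, he⟩ _).mp (hinjmem ⟨e, he⟩)
  -- spec for big edges
  have hσbig : ∀ e, big e = true →
      (t ≤ f e (σ e) ∧ Incident ends e (σ e)) ∨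
      (BalEdge ends big f t e ∧ σ e = inj' e) := by
    intro e hb
    by_cases h1 : t ≤ f e (ends e).1
    · left
      have : σ e = (ends e).1 := by simp [hσ, hb, h1]
      rw [this]; exact ⟨h1, Or.inl rfl⟩
    · by_cases h2 : t ≤ f e (ends e).2
      · left
        have : σ e = (ends e).2 := by simp [hσ, hb, h1, h2]
        rw [this]; exact ⟨h2, Or.inr rfl⟩
      · right
        refine ⟨⟨hb, by omega, by omega⟩, ?_⟩
        simp [hσ, hb, h1, h2]
  have hσsmall : ∀ e, big e = false → 1 ≤ g e (σ e) ∧ Incident ends e (σ e) := by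
    intro e hb
    have hlow := hlowg e (by simp [hb])
    unfold endSum at hlow
    by_cases h1 : 1 ≤ g e (ends e).1
    · have : σ e = (ends e).1 := by simp [hσ, hb, h1]
      rw [this]; exact ⟨h1, Or.inl rfl⟩
    · have hσe : σ e = (ends e).2 := by simp [hσ, hb, h1]
      rw [hσe]
      refine ⟨?_, Or.inr rfl⟩
      by_cases hl : (ends e).1 = (ends e).2
      · rw [if_pos hl] at hlow; rw [← hl]; omega
      · rw [if_neg hl] at hlow; omega
  have hIsOrient : IsOrientation ends σ := by
    intro e
    by_cases hb : big e
    · rcases hσbig e hb with ⟨-, h⟩ | ⟨hbal, heq⟩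
      · exact h
      · rw [heq]; exact hinj'mem e hbal
    · exact (hσsmall e (by simpa using hb)).2
  -- every big edge carries flow at least (k+1)/2 at its head
  have h2f : ∀ e, big e = true → k + 1 ≤ 2 * f e (σ e) := by
    intro e hb
    rcases hσbig e hb with ⟨h1, -⟩ | ⟨hbal, heq⟩
    · omega
    · rw [heq]; exact hBal2 e hbal _ (hinj'mem e hbal)
  -- at most one big edge is oriented to each vertex
  have hBone : ∀ i e₁ e₂, big e₁ = true → big e₂ = true → σ e₁ = i → σ e₂ = i →
      e₁ = e₂ := by
    intro i e₁ e₂ hb₁ hb₂ hs₁ hs₂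
    by_contra hne
    -- both in the incident big filter
    have hm₁ : e₁ ∈ univ.filter (fun e => big e ∧ Incident ends e i) := by
      simp only [Finset.mem_filter, Finset.mem_univ, true_and]
      exact ⟨by simp [hb₁], hs₁ ▸ hIsOrient e₁⟩
    have hm₂ : e₂ ∈ univ.filter (fun e => big e ∧ Incident ends e i) := by
      simp only [Finset.mem_filter, Finset.mem_univ, true_and]
      exact ⟨by simp [hb₂], hs₂ ▸ hIsOrient e₂⟩
    have hpair : f e₁ i + f e₂ i ≤ k + 1 := by
      have hsubset : ({e₁, e₂} : Finset E) ⊆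
          univ.filter (fun e => big e ∧ Incident ends e i) := by
        intro x hx
        rcases Finset.mem_insert.mp hx with rfl | hx
        · exact hm₁
        · rw [Finset.mem_singleton.mp hx]; exact hm₂
      calc f e₁ i + f e₂ i = ∑ e ∈ ({e₁, e₂} : Finset E), f e i :=
            (Finset.sum_pair (f := fun e => f e i) hne).symm
        _ ≤ ∑ e ∈ univ.filter (fun e => big e ∧ Incident ends e i), f e i :=
            Finset.sum_le_sum_of_subset hsubset
        _ ≤ k + 1 := hvf i
    have hf₁ : k + 1 ≤ 2 * f e₁ i := hs₁ ▸ h2f e₁ hb₁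
    have hf₂ : k + 1 ≤ 2 * f e₂ i := hs₂ ▸ h2f e₂ hb₂
    have hlt₁ : f e₁ i < t := by omega
    have hlt₂ : f e₂ i < t := by omega
    -- so both edges must be balanced and use `inj`
    have hb₁' : BalEdge ends big f t e₁ ∧ σ e₁ = inj' e₁ := by
      rcases hσbig e₁ hb₁ with ⟨h1, -⟩ | h
      · rw [hs₁] at h1; omega
      · exact h
    have hb₂' : BalEdge ends big f t e₂ ∧ σ e₂ = inj' e₂ := by
      rcases hσbig e₂ hb₂ with ⟨h1, -⟩ | h
      · rw [hs₂] at h1; omega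
      · exact h
    have heq : inj ⟨e₁, hb₁'.1⟩ = inj ⟨e₂, hb₂'.1⟩ := by
      have h1 : inj' e₁ = inj ⟨e₁, hb₁'.1⟩ := by simp [hinj', dif_pos hb₁'.1]
      have h2 : inj' e₂ = inj ⟨e₂, hb₂'.1⟩ := by simp [hinj', dif_pos hb₂'.1]
      rw [← h1, ← h2, ← hb₁'.2, ← hb₂'.2, hs₁, hs₂]
    exact hne (congrArg Subtype.val (hinj heq))
  -- ### the load bound
  refine ⟨σ, hIsOrient, fun i => ?_⟩
  set B : Finset E := univ.filter (fun e => big e = true ∧ σ e = i) with hB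
  set S : Finset E := univ.filter (fun e => big e = false ∧ σ e = i) with hS
  have hloadeq : load w σ i = (B.card : ℝ) + (S.card : ℝ) * c := by
    unfold load
    rw [Finset.sum_congr rfl (fun e _ => hw e)]
    rw [← Finset.sum_filter_add_sum_filter_not (univ.filter (fun e => σ e = i))
      (fun e => big e = true)]
    congr 1
    · rw [Finset.filter_filter]
      have : (univ.filter (fun e => σ e = i ∧ big e = true)) = B := by
        rw [hB]; congr 1; ext e; exact and_comm
      rw [this]
      have : ∀ e ∈ B, (if big e then (1:ℝ) else c) = 1 := by
        intro e he
        simp only [hB, Finset.mem_filter] at he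
        simp [he.2.1]
      rw [Finset.sum_congr rfl this, Finset.sum_const, nsmul_eq_mul, mul_one]
    · rw [Finset.filter_filter]
      have : (univ.filter (fun e => σ e = i ∧ ¬big e = true)) = S := by
        rw [hS]; congr 1; ext e
        simp only [Bool.not_eq_true]
        exact and_comm
      rw [this]
      have : ∀ e ∈ S, (if big e then (1:ℝ) else c) = c := by
        intro e he
        simp only [hS, Finset.mem_filter] at he
        simp [he.2.1]
      rw [Finset.sum_congr rfl this, Finset.sum_const, nsmul_eq_mul]
  -- small edge count bound
  have hScard : S.card ≤ ∑ e ∈ univ.filter (fun e => ¬ big e ∧ Incident ends e i), g e i := by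
    have hsub : S ⊆ univ.filter (fun e => ¬ big e ∧ Incident ends e i) := by
      intro e he
      simp only [hS, Finset.mem_filter, Finset.mem_univ, true_and] at he ⊢
      exact ⟨by simp [he.1], he.2 ▸ hIsOrient e⟩
    calc S.card = ∑ _e ∈ S, 1 := by rw [Finset.sum_const, smul_eq_mul, mul_one]
      _ ≤ ∑ e ∈ S, g e i := by
          refine Finset.sum_le_sum fun e he => ?_
          simp only [hS, Finset.mem_filter] at he
          have := (hσsmall e he.2.1).1
          rw [he.2.2] at this; exact this
      _ ≤ ∑ e ∈ univ.filter (fun e => ¬ big e ∧ Incident ends e i), g e i :=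
          Finset.sum_le_sum_of_subset hsub
  have hBcard : B.card ≤ 1 := by
    refine Finset.card_le_one.mpr fun e₁ h₁ e₂ h₂ => ?_
    simp only [hB, Finset.mem_filter] at h₁ h₂
    exact hBone i e₁ e₂ h₁.2.1 h₂.2.1 h₁.2.2 h₂.2.2
  rcases Nat.le_one_iff_eq_zero_or_eq_one.mp hBcard with hB0 | hB1
  · -- no big edge at i
    have hS' : S.card ≤ k₀' := le_trans hScard (by have := hvfg i; omega)
    rw [hloadeq, hB0]
    have : (S.card : ℝ) * c ≤ (k₀' : ℝ) * c := by
      apply mul_le_mul_of_nonneg_right _ hc0.le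
      exact_mod_cast hS'
    push_cast
    linarith
  · -- exactly one big edge e₀ at i
    obtain ⟨e₀, he₀⟩ := Finset.card_eq_one.mp hB1
    have he₀mem : e₀ ∈ B := by rw [he₀]; exact Finset.mem_singleton_self e₀
    simp only [hB, Finset.mem_filter, Finset.mem_univ, true_and] at he₀mem
    obtain ⟨hbig₀, hσ₀⟩ := he₀mem
    have hf₀ : k + 1 ≤ 2 * f e₀ i := hσ₀ ▸ h2f e₀ hbig₀
    have hfsum : f e₀ i ≤ ∑ e ∈ univ.filter (fun e => big e ∧ Incident ends e i), f e i := by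
      refine Finset.single_le_sum (f := fun e => f e i) (fun e _ => Nat.zero_le _) ?_
      simp only [Finset.mem_filter, Finset.mem_univ, true_and]
      exact ⟨by simp [hbig₀], hσ₀ ▸ hIsOrient e₀⟩
    have hnat : S.card + f e₀ i ≤ k₀' := by
      have := hvfg i; omega
    rw [hloadeq, hB1]
    -- real arithmetic
    have hr1 : (S.card : ℝ) + (f e₀ i : ℝ) ≤ (k₀' : ℝ) := by exact_mod_cast hnat
    have hr2 : ((k : ℝ) + 1) ≤ 2 * (f e₀ i : ℝ) := by exact_mod_cast hf₀
    have hr3 : (S.card : ℝ) * c + (f e₀ i : ℝ) * c ≤ (k₀' : ℝ) * c := by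
      have := mul_le_mul_of_nonneg_right hr1 hc0.le
      linarith [this]
    have hr4 : ((k : ℝ) + 1) * c ≤ 2 * ((f e₀ i : ℝ) * c) := by
      have := mul_le_mul_of_nonneg_right hr2 hc0.le
      linarith [this]
    push_cast
    linarith
end
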